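/- arXiv:2410.02600 — 8 statements merged into one kernel-verified Lean document; each statement's English description precedes it below -/
import Mathlib

section
/- Let S be a prefix-free set of finite bit strings, i.e. S ⊆ {0,1}* and no element of S is a proper or improper prefix of a different element of S (formally: for all x, y ∈ S, if x is a prefix of y then x = y). Then the sum Σ_{x ∈ S} 2^{−|x|} is at most 1, where |x| denotes the length of the string x. -/
open scoped ENNReal

/-- The finset of length-`|x| + k` extensions of `x`. -/
def kraftExt (x : List Bool) (k : ℕ) : Finset (List Bool) :=
  (Finset.univ : Finset (Fin k → Bool)).image (fun f => x ++ List.ofFn f)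

lemma kraftExt_card (x : List Bool) (k : ℕ) : (kraftExt x k).card = 2 ^ k := by
  rw [kraftExt, Finset.card_image_of_injective _ (fun f g h => by
    simpa [List.ofFn_inj] using List.append_cancel_left h)]
  simp [Finset.card_univ]

lemma kraftExt_mem {x y : List Bool} {k : ℕ} (h : y ∈ kraftExt x k) :
    x <+: y ∧ y.length = x.length + k := by
  rw [kraftExt, Finset.mem_image] at h
  obtain ⟨f, -, rfl⟩ := h
  exact ⟨⟨List.ofFn f, rfl⟩, by simp⟩

lemma kraftExt_subset (x : List Bool) {k n : ℕ} (h : x.length + k = n) :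
    kraftExt x k ⊆ kraftExt [] n := by
  intro y hy
  obtain ⟨⟨z, rfl⟩, hl⟩ := kraftExt_mem hy
  have : (x ++ z).length = n := by omega
  rw [kraftExt, Finset.mem_image]
  refine ⟨fun i => (x ++ z).get (Fin.cast this.symm i), Finset.mem_univ _, ?_⟩
  subst this
  simpa using List.ofFn_get (x ++ z)

/-- Finite version of Kraft's inequality. -/
lemma kraft_finset (F : Finset (List Bool))
    (hpf : ∀ x ∈ F, ∀ y ∈ F, x <+: y → x = y) :
    ∑ x ∈ F, (2 : ℝ≥0∞) ^ (-((x : List Bool).length : ℤ)) ≤ 1 := by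
  set n : ℕ := F.sup List.length with hn
  have hle : ∀ x ∈ F, x.length ≤ n := fun x hx => Finset.le_sup hx
  -- Counting bound in ℕ
  have hdisj : (F : Set (List Bool)).PairwiseDisjoint
      (fun x => kraftExt x (n - x.length)) := by
    intro x hx y hy hxy
    simp only [Finset.disjoint_left]
    intro z hzx hzy
    obtain ⟨hpx, -⟩ := kraftExt_mem hzx
    obtain ⟨hpy, -⟩ := kraftExt_mem hzy
    rcases List.prefix_or_prefix_of_prefix hpx hpy with h | h
    · exact hxy (hpf x hx y hy h)
    · exact hxy ((hpf y hy x hx h).symm)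
  have hcard : ∑ x ∈ F, 2 ^ (n - x.length) ≤ 2 ^ n := by
    calc ∑ x ∈ F, 2 ^ (n - x.length)
        = ∑ x ∈ F, (kraftExt x (n - x.length)).card := by
          refine Finset.sum_congr rfl fun x hx => ?_
          rw [kraftExt_card]
      _ = (F.biUnion (fun x => kraftExt x (n - x.length))).card := by
          rw [Finset.card_biUnion (fun x hx y hy hxy => hdisj hx hy hxy)]
      _ ≤ (kraftExt [] n).card := by
          apply Finset.card_le_card
          intro z hz
          rw [Finset.mem_biUnion] at hz
          obtain ⟨x, hx, hzx⟩ := hz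
          exact kraftExt_subset x (by have := hle x hx; omega) hzx
      _ = 2 ^ n := kraftExt_card [] n
  -- Transfer to ℝ≥0∞
  have h2 : (2 : ℝ≥0∞) ≠ 0 := by norm_num
  have h2' : (2 : ℝ≥0∞) ≠ ⊤ := by norm_num
  have key : ∀ x ∈ F, (2 : ℝ≥0∞) ^ (-(x.length : ℤ)) =
      (2 : ℝ≥0∞) ^ (n - x.length) * (2 : ℝ≥0∞) ^ (-(n : ℤ)) := by
    intro x hx
    have hxn := hle x hx
    rw [← zpow_natCast (2 : ℝ≥0∞) (n - x.length), ← ENNReal.zpow_add h2 h2']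
    congr 1
    omega
  calc ∑ x ∈ F, (2 : ℝ≥0∞) ^ (-(x.length : ℤ))
      = (∑ x ∈ F, (2 : ℝ≥0∞) ^ (n - x.length)) * (2 : ℝ≥0∞) ^ (-(n : ℤ)) := by
        rw [Finset.sum_mul]; exact Finset.sum_congr rfl key
    _ ≤ (2 : ℝ≥0∞) ^ n * (2 : ℝ≥0∞) ^ (-(n : ℤ)) := by
        gcongr
        calc (∑ x ∈ F, (2 : ℝ≥0∞) ^ (n - x.length))
            = ((∑ x ∈ F, 2 ^ (n - x.length) : ℕ) : ℝ≥0∞) := by push_cast; rfl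
          _ ≤ ((2 ^ n : ℕ) : ℝ≥0∞) := by exact_mod_cast Nat.cast_le.mpr hcard
          _ = (2 : ℝ≥0∞) ^ n := by push_cast; rfl
    _ = 1 := by
        rw [← zpow_natCast (2 : ℝ≥0∞) n, ← ENNReal.zpow_add h2 h2']
        simp

/-- **Kraft–McMillan inequality.** If `S` is a prefix-free set of finite bit strings
(no element of `S` is a prefix of a different element of `S`), then
`∑_{x ∈ S} 2^{-|x|} ≤ 1`. -/
theorem kraft_mcmillan (S : Set (List Bool))
    (hpf : ∀ x ∈ S, ∀ y ∈ S, x <+: y → x = y) :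
    ∑' x : S, (2 : ℝ≥0∞) ^ (-((x : List Bool).length : ℤ)) ≤ 1 := by
  rw [ENNReal.tsum_eq_iSup_sum]
  refine iSup_le fun s => ?_
  have hinj : Function.Injective (fun x : S => (x : List Bool)) := Subtype.val_injective
  calc ∑ x ∈ s, (2 : ℝ≥0∞) ^ (-((x : List Bool).length : ℤ))
      = ∑ x ∈ s.image (fun x : S => (x : List Bool)),
          (2 : ℝ≥0∞) ^ (-(x.length : ℤ)) := by
        rw [Finset.sum_image (fun a _ b _ h => hinj h)]
    _ ≤ 1 := by
        apply kraft_finset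
        intro x hx y hy hxy
        rw [Finset.mem_image] at hx hy
        obtain ⟨⟨x, hxS⟩, -, rfl⟩ := hx
        obtain ⟨⟨y, hyS⟩, -, rfl⟩ := hy
        exact hpf x hxS y hyS hxy
end

section
/- Let Ω ∈ (0,1) be a real number and let (Ω_m)_{m∈ℕ} be a nondecreasing sequence of real numbers converging to Ω with Ω_m ≤ Ω for all m. Fix a real number φ with 0 < φ < Ω. Then for all sufficiently large m, every element φ̃_m of the set {⌊2^m φ⌋/2^m, ⌈2^m φ⌉/2^m} satisfies 0 < φ̃_m < Ω_m ↾ m. -/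
/-- The `m`-bit truncation of a real number `x`: `x ↾ m = ⌊2^m x⌋ / 2^m`. -/
noncomputable def trunc (x : ℝ) (m : ℕ) : ℝ := (⌊(2 : ℝ) ^ m * x⌋ : ℝ) / 2 ^ m

/-- First ("halting") half of the paper's Theorem 3: if `0 < φ < Ω` with
`Ω ∈ (0,1)` and `(Ω_m)` nondecreasing lower approximations converging to `Ω`,
then for all sufficiently large `m`, every best `m`-bit approximation
`φ̃ ∈ {⌊2^m φ⌋/2^m, ⌈2^m φ⌉/2^m}` satisfies `0 < φ̃ < Ω_m ↾ m`. -/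
theorem halting_half (Ω : ℝ) (hΩ : Ω ∈ Set.Ioo (0 : ℝ) 1)
    (Ωm : ℕ → ℝ)
    (hmono : Monotone Ωm)
    (hle : ∀ m, Ωm m ≤ Ω)
    (hlim : Filter.Tendsto Ωm Filter.atTop (nhds Ω))
    (φ : ℝ) (hφ0 : 0 < φ) (hφΩ : φ < Ω) :
    ∃ m₀ : ℕ, ∀ m ≥ m₀,
      ∀ x ∈ ({(⌊(2 : ℝ) ^ m * φ⌋ : ℝ) / 2 ^ m,
               (⌈(2 : ℝ) ^ m * φ⌉ : ℝ) / 2 ^ m} : Set ℝ),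
        0 < x ∧ x < trunc (Ωm m) m := by
  set ε : ℝ := (Ω - φ) / 2 with hεdef
  have hεpos : 0 < ε := by simp only [hεdef]; linarith
  have h1 : ∀ᶠ m in Filter.atTop, Ω - ε < Ωm m :=
    hlim.eventually (eventually_gt_nhds (by linarith))
  obtain ⟨m₁, hm₁⟩ := Filter.eventually_atTop.mp h1
  obtain ⟨n, hn⟩ := exists_pow_lt_of_lt_one
    (show (0:ℝ) < min φ (ε/2) from lt_min hφ0 (by linarith))
    (show (1/2:ℝ) < 1 by norm_num)
  refine ⟨max m₁ n, fun m hm x hx => ?_⟩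
  have hp : (0:ℝ) < 2 ^ m := by positivity
  have hpowle : ((1:ℝ)/2) ^ m ≤ (1/2) ^ n :=
    pow_le_pow_of_le_one (by norm_num) (by norm_num)
      (le_trans (le_max_right _ _) hm)
  have hpoweq : ((1:ℝ)/2) ^ m = 1 / 2 ^ m := by
    rw [div_pow, one_pow]
  have hsmall : 1 / (2:ℝ) ^ m < min φ (ε/2) := by
    rw [← hpoweq]; exact lt_of_le_of_lt hpowle hn
  have hsφ : 1 / (2:ℝ) ^ m < φ := lt_of_lt_of_le hsmall (min_le_left _ _)
  have hsε : 1 / (2:ℝ) ^ m < ε / 2 := lt_of_lt_of_le hsmall (min_le_right _ _)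
  have hΩlow : Ω - ε < Ωm m := hm₁ m (le_trans (le_max_left _ _) hm)
  -- positivity of floor part
  have hfloor1 : (1:ℤ) ≤ ⌊(2:ℝ) ^ m * φ⌋ := by
    rw [Int.le_floor]
    push_cast
    rw [div_lt_iff₀ hp] at hsφ
    nlinarith
  have hfloorpos : (0:ℝ) < (⌊(2:ℝ) ^ m * φ⌋ : ℝ) / 2 ^ m := by
    apply div_pos _ hp
    exact_mod_cast lt_of_lt_of_le zero_lt_one hfloor1
  -- upper bound: ceil / 2^m < φ + 1/2^m
  have hceil : ((⌈(2:ℝ) ^ m * φ⌉ : ℝ)) / 2 ^ m < φ + 1 / 2 ^ m := by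
    rw [div_lt_iff₀ hp]
    have h2 := Int.ceil_lt_add_one ((2:ℝ) ^ m * φ)
    have h3 : (1 / (2:ℝ) ^ m) * 2 ^ m = 1 := by field_simp
    nlinarith
  -- lower bound on trunc
  have htrunc : Ωm m - 1 / 2 ^ m < trunc (Ωm m) m := by
    unfold trunc
    rw [lt_div_iff₀ hp]
    have h2 := Int.lt_floor_add_one ((2:ℝ) ^ m * Ωm m)
    have h3 : (1 / (2:ℝ) ^ m) * 2 ^ m = 1 := by field_simp
    nlinarith
  have hkey : φ + 1 / 2 ^ m < trunc (Ωm m) m := by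
    have : φ + 1 / 2 ^ m < Ωm m - 1 / 2 ^ m := by
      have : Ω - φ = 2 * ε := by rw [hεdef]; ring
      linarith
    linarith
  have hfc : (⌊(2:ℝ) ^ m * φ⌋ : ℝ) ≤ (⌈(2:ℝ) ^ m * φ⌉ : ℝ) := by
    exact_mod_cast Int.floor_le_ceil _
  have hfle : (⌊(2:ℝ) ^ m * φ⌋ : ℝ) / 2 ^ m ≤ (⌈(2:ℝ) ^ m * φ⌉ : ℝ) / 2 ^ m := by
    gcongr
  rcases hx with hx | hx
  · subst hx
    exact ⟨hfloorpos, lt_of_le_of_lt hfle (lt_trans hceil hkey)⟩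
  · rw [Set.mem_singleton_iff] at hx
    subst hx
    exact ⟨lt_of_lt_of_le hfloorpos hfle, lt_trans hceil hkey⟩
end

section
/- Fix m ∈ ℕ with m ≥ 1 and define the rounding function r_m : ℝ → ℝ by r_m(x) = x + 2^{−m} if ⌊2^{m+1} x⌋ is odd, and r_m(x) = x otherwise. Let φ, φ′ ∈ ℝ satisfy |φ′ − φ| < 2^{−(m+1)}. Then ⌊2^m r_m(φ′)⌋ / 2^m equals either ⌊2^m φ⌋ / 2^m or ⌈2^m φ⌉ / 2^m. -/
/-- Core arithmetic content of the paper's Lemma 2 (rounding): fix `m ≥ 1` and define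
`r_m(x) = x + 2^{-m}` if the `(m+1)`-th bit of `x` is `1` (i.e. `⌊2^{m+1} x⌋` is odd),
and `r_m(x) = x` otherwise. If `|φ' - φ| < 2^{-(m+1)}`, then `⌊2^m r_m(φ')⌋ / 2^m`
equals either `⌊2^m φ⌋ / 2^m` or `⌈2^m φ⌉ / 2^m`. -/
theorem rounding_lemma (m : ℕ) (hm : 1 ≤ m) (φ φ' : ℝ)
    (h : |φ' - φ| < (2 : ℝ) ^ (-(m + 1 : ℤ)))
    (r : ℝ)
    (hr : r = if Odd ⌊(2 : ℝ) ^ (m + 1) * φ'⌋ then φ' + (2 : ℝ) ^ (-(m : ℤ)) else φ') :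
    (⌊(2 : ℝ) ^ m * r⌋ : ℝ) / 2 ^ m = (⌊(2 : ℝ) ^ m * φ⌋ : ℝ) / 2 ^ m ∨
    (⌊(2 : ℝ) ^ m * r⌋ : ℝ) / 2 ^ m = (⌈(2 : ℝ) ^ m * φ⌉ : ℝ) / 2 ^ m := by
  have h2m : (0:ℝ) < 2 ^ m := by positivity
  set x : ℝ := 2 ^ m * φ with hx
  set x' : ℝ := 2 ^ m * φ' with hx'
  have hdist : |x' - x| < 1/2 := by
    have hsub : x' - x = 2 ^ m * (φ' - φ) := by ring
    rw [hsub, abs_mul, abs_of_pos h2m]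
    calc 2 ^ m * |φ' - φ| < 2 ^ m * (2:ℝ) ^ (-(m + 1 : ℤ)) :=
          mul_lt_mul_of_pos_left h h2m
      _ = 1/2 := by
          rw [← zpow_natCast (2:ℝ) m, ← zpow_add₀ (by norm_num : (2:ℝ) ≠ 0)]
          norm_num
  have hd := abs_lt.mp hdist
  set a : ℤ := ⌊x'⌋ with ha
  have hal : (a:ℝ) ≤ x' := Int.floor_le x'
  have hau : x' < a + 1 := Int.lt_floor_add_one x'
  have h2x' : (2:ℝ) ^ (m + 1) * φ' = 2 * x' := by rw [hx', pow_succ]; ring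
  suffices hs : ⌊(2:ℝ) ^ m * r⌋ = ⌊x⌋ ∨ ⌊(2:ℝ) ^ m * r⌋ = ⌈x⌉ by
    rcases hs with h1 | h1
    · left; rw [h1]
    · right; rw [h1]
  by_cases hb : (a:ℝ) + 1/2 ≤ x'
  · -- bit is 1
    have hodd : Odd ⌊(2:ℝ) ^ (m + 1) * φ'⌋ := by
      have hfl : ⌊2 * x'⌋ = 2 * a + 1 := by
        rw [Int.floor_eq_iff]
        constructor <;> push_cast <;> linarith
      rw [h2x', hfl]
      exact ⟨a, by ring⟩
    rw [hr, if_pos hodd]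
    have hrr : (2:ℝ) ^ m * (φ' + (2:ℝ) ^ (-(m:ℤ))) = x' + 1 := by
      rw [mul_add, ← zpow_natCast (2:ℝ) m, ← zpow_add₀ (by norm_num : (2:ℝ) ≠ 0)]
      simp [hx']
    rw [hrr, Int.floor_add_one, ← ha]
    by_cases hc : x < a + 1
    · right
      symm
      rw [Int.ceil_eq_iff]
      constructor <;> push_cast <;> linarith
    · left
      symm
      rw [Int.floor_eq_iff]
      constructor <;> push_cast <;> linarith
  · -- bit is 0
    have heven : ¬ Odd ⌊(2:ℝ) ^ (m + 1) * φ'⌋ := by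
      have hfl : ⌊2 * x'⌋ = 2 * a := by
        rw [Int.floor_eq_iff]
        constructor <;> push_cast <;> linarith
      rw [h2x', hfl, Int.odd_iff]
      omega
    rw [hr, if_neg heven, ← hx', ← ha]
    by_cases hc : (a:ℝ) ≤ x
    · left
      symm
      rw [Int.floor_eq_iff]
      constructor <;> push_cast <;> linarith
    · right
      symm
      rw [Int.ceil_eq_iff]
      constructor <;> push_cast <;> linarith
end

section
/- Let T ≥ 1 and d ≥ 1 be natural numbers, let U_1, …, U_T be unitary d×d complex matrices, and let Π_in and Π_out be orthogonal projections on ℂ^d (Hermitian idempotent matrices). On ℂ^{T+1} ⊗ ℂ^d define the Hermitian matrix H = Σ_{t=0}^{T−1} [ (|t⟩⟨t| + |t+1⟩⟨t+1|) ⊗ I − |t+1⟩⟨t| ⊗ U_{t+1} − |t⟩⟨t+1| ⊗ U_{t+1}^† ] + |0⟩⟨0| ⊗ Π_in + |T⟩⟨T| ⊗ Π_out, where {|t⟩}_{t=0}^{T} is the standard basis of ℂ^{T+1}. Suppose ψ ∈ ℂ^d is a unit vector with Π_in ψ = 0 and ⟨U_T ⋯ U_1 ψ, Π_out U_T ⋯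 U_1 ψ⟩ ≤ η for some real η ≥ 0. Then the smallest eigenvalue of H is at most η/(T+1). -/
open Matrix
open scoped Kronecker ComplexOrder

/-!
Consecutive components of the history state `Φ = ∑ₜ |t⟩ ⊗ Uₜ ⋯ U₁ ψ` differ by exactly the unitary
that the corresponding propagation term expects, so every propagation term, and the input penalty,
annihilate the quadratic form at `Φ`: `⟨Φ, H Φ⟩ = ⟨ψ_T, Π_out ψ_T⟩`, while `‖Φ‖² = T + 1`. The
smallest eigenvalue `λ` bounds every Rayleigh quotient from below, because `H - λ` is positive
semidefinite by the spectral theorem.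
-/

namespace Matrix

section Rayleigh

variable {n 𝕜 : Type*} [Fintype n] [DecidableEq n] [RCLike 𝕜] {A : Matrix n n 𝕜}

lemma IsHermitian.posSemidef_sub_smul_one (hA : A.IsHermitian) {c : ℝ}
    (hc : ∀ i, c ≤ hA.eigenvalues i) : (A - (c : 𝕜) • 1).PosSemidef := by
  have hdiag : A - (c : 𝕜) • 1 = Unitary.conjStarAlgAut 𝕜 _ hA.eigenvectorUnitary
      (diagonal fun i => ((hA.eigenvalues i - c : ℝ) : 𝕜)) := by
    conv_lhs => rw [hA.spectral_theorem]
    rw [← map_one (Unitary.conjStarAlgAut 𝕜 _ hA.eigenvectorUnitary), ← map_smul, ← map_sub]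
    congr 1
    ext i j
    by_cases h : i = j <;> simp [h, Algebra.algebraMap_eq_smul_one, sub_smul]
  rw [hdiag, Unitary.conjStarAlgAut_apply,
    Unitary.isUnit_coe.posSemidef_star_right_conjugate_iff, posSemidef_diagonal_iff]
  exact fun i => mod_cast sub_nonneg.mpr (hc i)

lemma IsHermitian.exists_eigenvalues_mul_le (hA : A.IsHermitian) [Nonempty n] (v : n → 𝕜) :
    ∃ i, hA.eigenvalues i * RCLike.re (star v ⬝ᵥ v) ≤ RCLike.re (star v ⬝ᵥ A *ᵥ v) := by
  obtain ⟨i, -, hi⟩ := Finset.univ.exists_min_image hA.eigenvalues Finset.univ_nonempty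
  refine ⟨i, sub_nonneg.mp ?_⟩
  have := (hA.posSemidef_sub_smul_one fun j => hi j (Finset.mem_univ j)).re_dotProduct_nonneg v
  simpa [sub_mulVec, smul_mulVec, dotProduct_sub, dotProduct_smul, RCLike.smul_re] using this

end Rayleigh

variable {m n R : Type*} [Fintype m] [Fintype n]

lemma star_uncurry_dotProduct_single_kronecker_mulVec [DecidableEq m] [Semiring R] [Star R]
    (u w : m → n → R) (a b : m) (N : Matrix n n R) :
    star (Function.uncurry u) ⬝ᵥ (single a b 1 ⊗ₖ N) *ᵥ Function.uncurry w
      = star (u a) ⬝ᵥ N *ᵥ w b := by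
  simp only [dotProduct, mulVec, Fintype.sum_prod_type, kroneckerMap_apply, single_apply,
    Pi.star_apply, Function.uncurry_apply_pair]
  simp [ite_and, Finset.mul_sum]

lemma star_uncurry_dotProduct_self [Semiring R] [Star R] (u : m → n → R) :
    star (Function.uncurry u) ⬝ᵥ Function.uncurry u = ∑ a, star (u a) ⬝ᵥ u a := by
  simp only [dotProduct, Fintype.sum_prod_type, Pi.star_apply, Function.uncurry_apply_pair]

variable [DecidableEq n] [CommRing R] [StarRing R] {V : Matrix n n R}

lemma star_dotProduct_conjTranspose_mulVec_mulVec (hV : V ∈ unitaryGroup n R) (x : n → R) :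
    star x ⬝ᵥ Vᴴ *ᵥ V *ᵥ x = star x ⬝ᵥ x := by
  rw [mulVec_mulVec, ← star_eq_conjTranspose, Unitary.star_mul_self_of_mem hV, one_mulVec]

lemma star_mulVec_dotProduct_mulVec (hV : V ∈ unitaryGroup n R) (x : n → R) :
    star (V *ᵥ x) ⬝ᵥ V *ᵥ x = star x ⬝ᵥ x := by
  rw [star_mulVec, ← dotProduct_mulVec, star_dotProduct_conjTranspose_mulVec_mulVec hV]

end Matrix

section FeynmanKitaev

variable {n R : Type*} [Fintype n] [DecidableEq n]

section Computation

variable [Semiring R]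

def computationState (U : ℕ → Matrix n n R) (ψ : n → R) (t : ℕ) : n → R :=
  ((List.range t).reverse.map U).prod *ᵥ ψ

variable {U : ℕ → Matrix n n R} {ψ : n → R}

@[simp]
lemma computationState_zero : computationState U ψ 0 = ψ := by
  simp [computationState]

lemma computationState_succ (t : ℕ) :
    computationState U ψ (t + 1) = U t *ᵥ computationState U ψ t := by
  simp [computationState, List.range_succ, mulVec_mulVec]

end Computation

variable [CommRing R] [StarRing R]

def propagationTerm {m : Type*} [DecidableEq m] (a b : m) (V : Matrix n n R) :
    Matrix (m × n) (m × n) R :=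
  (single a a 1 + single b b 1) ⊗ₖ 1 - single b a 1 ⊗ₖ V - single a b 1 ⊗ₖ Vᴴ

def fkHamiltonian (T : ℕ) (U : ℕ → Matrix n n R) (Pin Pout : Matrix n n R) :
    Matrix (Fin (T + 1) × n) (Fin (T + 1) × n) R :=
  ∑ t : Fin T, propagationTerm t.castSucc t.succ (U t)
    + single 0 0 1 ⊗ₖ Pin + single (Fin.last T) (Fin.last T) 1 ⊗ₖ Pout

/-- The history state, without the normalising factor `1 / √(T + 1)`. -/
def historyState (T : ℕ) (U : ℕ → Matrix n n R) (ψ : n → R) : Fin (T + 1) × n → R :=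
  Function.uncurry fun t : Fin (T + 1) => computationState U ψ t

variable {U : ℕ → Matrix n n R} {ψ : n → R}

lemma star_computationState_dotProduct_self {T : ℕ} (hU : ∀ t < T, U t ∈ unitaryGroup n R)
    {t : ℕ} (ht : t ≤ T) :
    star (computationState U ψ t) ⬝ᵥ computationState U ψ t = star ψ ⬝ᵥ ψ := by
  induction t with
  | zero => simp
  | succ t ih =>
    rw [computationState_succ, star_mulVec_dotProduct_mulVec (hU t ht), ih (by omega)]

lemma star_historyState_dotProduct_self {T : ℕ} (hU : ∀ t < T, U t ∈ unitaryGroup n R) :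
    star (historyState T U ψ) ⬝ᵥ historyState T U ψ = (T + 1) * (star ψ ⬝ᵥ ψ) := by
  rw [historyState, star_uncurry_dotProduct_self]
  simp [star_computationState_dotProduct_self hU (Fin.is_le _)]

lemma star_dotProduct_propagationTerm_mulVec_eq_zero {m : Type*} [Fintype m] [DecidableEq m]
    {V : Matrix n n R} (hV : V ∈ unitaryGroup n R) {f : m → n → R} {a b : m}
    (hf : f b = V *ᵥ f a) :
    star (Function.uncurry f) ⬝ᵥ propagationTerm a b V *ᵥ Function.uncurry f = 0 := by
  simp only [propagationTerm, sub_mulVec, add_kronecker, add_mulVec, dotProduct_sub,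
    dotProduct_add, star_uncurry_dotProduct_single_kronecker_mulVec, one_mulVec, hf,
    star_mulVec_dotProduct_mulVec hV, star_dotProduct_conjTranspose_mulVec_mulVec hV]
  abel

lemma star_historyState_dotProduct_fkHamiltonian_mulVec {T : ℕ}
    (hU : ∀ t < T, U t ∈ unitaryGroup n R) {Pin Pout : Matrix n n R} (hψ : Pin *ᵥ ψ = 0) :
    star (historyState T U ψ) ⬝ᵥ fkHamiltonian T U Pin Pout *ᵥ historyState T U ψ
      = star (computationState U ψ T) ⬝ᵥ Pout *ᵥ computationState U ψ T := by
  have hprop : ∀ t : Fin T, star (historyState T U ψ) ⬝ᵥ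
      propagationTerm t.castSucc t.succ (U t) *ᵥ historyState T U ψ = 0 := fun t =>
    star_dotProduct_propagationTerm_mulVec_eq_zero (hU t t.isLt) (computationState_succ t)
  rw [fkHamiltonian, add_mulVec, add_mulVec, sum_mulVec, dotProduct_add, dotProduct_add,
    dotProduct_sum, Finset.sum_eq_zero fun t _ => hprop t, historyState,
    star_uncurry_dotProduct_single_kronecker_mulVec,
    star_uncurry_dotProduct_single_kronecker_mulVec]
  simp [hψ]

end FeynmanKitaev

theorem fk_ground_energy_upper_bound_general (T d : ℕ) (hd : 1 ≤ d)
    (U : ℕ → Matrix (Fin d) (Fin d) ℂ)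
    (hU : ∀ t < T, U t ∈ Matrix.unitaryGroup (Fin d) ℂ)
    (Pin Pout : Matrix (Fin d) (Fin d) ℂ)
    (ψ : Fin d → ℂ) (hψ : star ψ ⬝ᵥ ψ = 1)
    (hker : Pin.mulVec ψ = 0)
    (η : ℝ)
    (ψT : Fin d → ℂ)
    (hψT : ψT = (((List.range T).reverse.map U).prod).mulVec ψ)
    (hout : (star ψT ⬝ᵥ Pout.mulVec ψT).re ≤ η)
    (H : Matrix (Fin (T + 1) × Fin d) (Fin (T + 1) × Fin d) ℂ)
    (hH : H =
      (∑ t : Fin T,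
        ((Matrix.single t.castSucc t.castSucc (1 : ℂ)
            + Matrix.single t.succ t.succ (1 : ℂ)) ⊗ₖ (1 : Matrix (Fin d) (Fin d) ℂ)
          - Matrix.single t.succ t.castSucc (1 : ℂ) ⊗ₖ U t
          - Matrix.single t.castSucc t.succ (1 : ℂ) ⊗ₖ (U t)ᴴ))
        + Matrix.single (0 : Fin (T + 1)) (0 : Fin (T + 1)) (1 : ℂ) ⊗ₖ Pin
        + Matrix.single (Fin.last T) (Fin.last T) (1 : ℂ) ⊗ₖ Pout)
    (hHerm : H.IsHermitian) :
    ∃ i, hHerm.eigenvalues i ≤ η / (T + 1) := by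
  have : Nonempty (Fin (T + 1) × Fin d) := ⟨(0, ⟨0, hd⟩)⟩
  have hFK : H = fkHamiltonian T U Pin Pout := hH
  have hnorm : star (historyState T U ψ) ⬝ᵥ historyState T U ψ = T + 1 := by
    rw [star_historyState_dotProduct_self hU, hψ, mul_one]
  have henergy : star (historyState T U ψ) ⬝ᵥ H *ᵥ historyState T U ψ
      = star ψT ⬝ᵥ Pout *ᵥ ψT := by
    rw [hFK, star_historyState_dotProduct_fkHamiltonian_mulVec hU hker, hψT, computationState]
  obtain ⟨i, hi⟩ := hHerm.exists_eigenvalues_mul_le (historyState T U ψ)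
  refine ⟨i, (le_div_iff₀ (by positivity)).mpr ?_⟩
  rw [hnorm, henergy] at hi
  simpa using hi.trans hout

/-- Paper's Lemma 4 (ground-state energy upper bound for the Feynman–Kitaev
Hamiltonian): let `H` be the clock Hamiltonian of a `T`-step computation with
unitaries `U_1, …, U_T` (here `0`-indexed as `U 0, …, U (T-1)`), input penalty
`Πin` and output penalty `Πout`. If some unit vector `ψ` with `Πin ψ = 0` has
final output penalty `⟨ψ_T, Πout ψ_T⟩ ≤ η` where `ψ_T = U_T ⋯ U_1 ψ`, then the
smallest eigenvalue of `H` is at most `η / (T+1)`. -/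
theorem fk_ground_energy_upper_bound (T d : ℕ) (hT : 1 ≤ T) (hd : 1 ≤ d)
    (U : ℕ → Matrix (Fin d) (Fin d) ℂ)
    (hU : ∀ t < T, U t ∈ Matrix.unitaryGroup (Fin d) ℂ)
    (Pin Pout : Matrix (Fin d) (Fin d) ℂ)
    (hin1 : Pin.IsHermitian) (hin2 : Pin * Pin = Pin)
    (hout1 : Pout.IsHermitian) (hout2 : Pout * Pout = Pout)
    (ψ : Fin d → ℂ) (hψ : star ψ ⬝ᵥ ψ = 1)
    (hker : Pin.mulVec ψ = 0)
    (η : ℝ) (hη : 0 ≤ η)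
    (ψT : Fin d → ℂ)
    (hψT : ψT = (((List.range T).reverse.map U).prod).mulVec ψ)
    (hout : (star ψT ⬝ᵥ Pout.mulVec ψT).re ≤ η)
    (H : Matrix (Fin (T + 1) × Fin d) (Fin (T + 1) × Fin d) ℂ)
    (hH : H =
      (∑ t : Fin T,
        ((Matrix.single t.castSucc t.castSucc (1 : ℂ)
            + Matrix.single t.succ t.succ (1 : ℂ)) ⊗ₖ (1 : Matrix (Fin d) (Fin d) ℂ)
          - Matrix.single t.succ t.castSucc (1 : ℂ) ⊗ₖ U t
          - Matrix.single t.castSucc t.succ (1 : ℂ) ⊗ₖ (U t)ᴴ))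
        + Matrix.single (0 : Fin (T + 1)) (0 : Fin (T + 1)) (1 : ℂ) ⊗ₖ Pin
        + Matrix.single (Fin.last T) (Fin.last T) (1 : ℂ) ⊗ₖ Pout)
    (hHerm : H.IsHermitian) :
    ∃ i, hHerm.eigenvalues i ≤ η / (T + 1) :=
  fk_ground_energy_upper_bound_general T d hd U hU Pin Pout ψ hψ hker η ψT hψT hout H hH hHerm
end

section
/- Let N ≥ 1 be a natural number and let M be the N×N real symmetric tridiagonal matrix with M_{ii} = 2 for 1 ≤ i ≤ N−1, M_{NN} = 1, and M_{i,i+1} = M_{i+1,i} = −1 for 1 ≤ i ≤ N−1. Then the smallest eigenvalue of M equals 2 − 2cos(π/(2N+1)). -/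
/-!
The vector `w j = sin ((j + 1) θ)`, `θ = π / (2N + 1)`, is a positive eigenvector with eigenvalue
`2 - 2 cos θ`: the interior rows are the recurrence `sin (a - θ) + sin (a + θ) = 2 cos θ sin a`,
the first row holds because `sin 0 = 0`, and the last row, with diagonal entry `1`, because
`(2N + 1) θ = π` gives `sin ((N + 1) θ) = sin (N θ)`.

A symmetric matrix `A` with nonpositive off-diagonal entries and a positive eigenvector `w`,
`A w = μ w`, has `μ` as its smallest eigenvalue: writing `x = w * y`, the ground-state identity
`2 (xᵀ A x - μ xᵀ x) = -∑ i j, A i j w i w j (y i - y j) ^ 2` shows `xᵀ A x ≥ μ xᵀ x`.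
-/

open Matrix Finset Real

namespace Matrix

variable {n : Type*} [Fintype n]

theorem two_mul_dotProduct_mulVec_sub_eq_neg_sum {A : Matrix n n ℝ} (hA : A.IsSymm)
    {w : n → ℝ} {μ : ℝ} (hAw : A *ᵥ w = μ • w) (y : n → ℝ) :
    2 * ((w * y) ⬝ᵥ (A *ᵥ (w * y)) - μ * ((w * y) ⬝ᵥ (w * y))) =
      -∑ i, ∑ j, A i j * w i * w j * (y i - y j) ^ 2 := by
  have hexpand : ∑ i, ∑ j, A i j * w i * w j * (y i - y j) ^ 2 =
      ∑ i, ∑ j, A i j * w i * w j * y i ^ 2 + ∑ i, ∑ j, A i j * w i * w j * y j ^ 2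
        - 2 * ∑ i, ∑ j, A i j * w i * w j * (y i * y j) := by
    simp only [mul_sum, ← sum_add_distrib, ← sum_sub_distrib]
    exact sum_congr rfl fun i _ => sum_congr rfl fun j _ => by ring
  have hdiag : ∑ i, ∑ j, A i j * w i * w j * y i ^ 2 = μ * ((w * y) ⬝ᵥ (w * y)) := by
    simp only [dotProduct, mul_sum]
    refine sum_congr rfl fun i _ => ?_
    have hrow : ∑ j, A i j * w j = μ * w i := congrFun hAw i
    calc ∑ j, A i j * w i * w j * y i ^ 2 = (∑ j, A i j * w j) * (w i * y i ^ 2) := by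
          rw [sum_mul]; exact sum_congr rfl fun j _ => by ring
      _ = μ * ((w * y) i * (w * y) i) := by rw [hrow, Pi.mul_apply]; ring
  have hdiag' : ∑ i, ∑ j, A i j * w i * w j * y j ^ 2 =
      ∑ i, ∑ j, A i j * w i * w j * y i ^ 2 := by
    rw [sum_comm]
    exact sum_congr rfl fun i _ => sum_congr rfl fun j _ => by rw [hA.apply i j]; ring
  have hcross : ∑ i, ∑ j, A i j * w i * w j * (y i * y j) = (w * y) ⬝ᵥ (A *ᵥ (w * y)) := by
    simp only [dotProduct, mulVec, mul_sum, Pi.mul_apply]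
    exact sum_congr rfl fun i _ => sum_congr rfl fun j _ => by ring
  linarith

theorem mul_dotProduct_self_le_dotProduct_mulVec_of_pos_eigenvector {A : Matrix n n ℝ}
    (hA : A.IsSymm) (hA_off : ∀ i j, i ≠ j → A i j ≤ 0) {w : n → ℝ} (hw : ∀ i, 0 < w i)
    {μ : ℝ} (hAw : A *ᵥ w = μ • w) (x : n → ℝ) : μ * (x ⬝ᵥ x) ≤ x ⬝ᵥ (A *ᵥ x) := by
  have hx : x = w * (x / w) := funext fun i => (mul_div_cancel₀ _ (hw i).ne').symm
  have hterm : ∀ i j, A i j * w i * w j * ((x / w) i - (x / w) j) ^ 2 ≤ 0 := by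
    intro i j
    rcases eq_or_ne i j with rfl | hij
    · simp
    · exact mul_nonpos_of_nonpos_of_nonneg
        (mul_nonpos_of_nonpos_of_nonneg (mul_nonpos_of_nonpos_of_nonneg (hA_off i j hij)
          (hw i).le) (hw j).le) (sq_nonneg _)
  have hident := two_mul_dotProduct_mulVec_sub_eq_neg_sum hA hAw (x / w)
  rw [← hx] at hident
  linarith [sum_nonpos fun i (_ : i ∈ univ) => sum_nonpos fun j (_ : j ∈ univ) => hterm i j]

variable [DecidableEq n] {A : Matrix n n ℝ} (hA : A.IsHermitian)

theorem IsHermitian.le_eigenvalues_of_pos_eigenvector (hA_off : ∀ i j, i ≠ j → A i j ≤ 0)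
    {w : n → ℝ} (hw : ∀ i, 0 < w i) {μ : ℝ} (hAw : A *ᵥ w = μ • w) (i : n) :
    μ ≤ hA.eigenvalues i := by
  set v : n → ℝ := ⇑(hA.eigenvectorBasis i)
  have hv : 0 < v ⬝ᵥ v := by
    have hv0 : v ≠ 0 := (WithLp.ofLp_eq_zero 2).ne.2 <| hA.eigenvectorBasis.orthonormal.ne_zero i
    exact dotProduct_self_star_pos_iff.2 hv0
  have hle := mul_dotProduct_self_le_dotProduct_mulVec_of_pos_eigenvector
    (isHermitian_iff_isSymm.1 hA) hA_off hw hAw v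
  rw [hA.mulVec_eigenvectorBasis, dotProduct_smul, smul_eq_mul] at hle
  exact le_of_mul_le_mul_right hle hv

theorem IsHermitian.mem_range_eigenvalues_of_mulVec_eq_smul {v : n → ℝ} (hv : v ≠ 0) {μ : ℝ}
    (hAv : A *ᵥ v = μ • v) : μ ∈ Set.range hA.eigenvalues := by
  rw [← hA.spectrum_real_eq_range_eigenvalues, ← spectrum_toLin']
  exact Module.End.HasEigenvalue.mem_spectrum
    (Module.End.hasEigenvalue_of_hasEigenvector ⟨Module.End.mem_eigenspace_iff.2 hAv, hv⟩)

end Matrix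

theorem sin_nat_add_two_mul_add_sin (θ : ℝ) (n : ℕ) :
    sin ((n + 2 : ℕ) * θ) + sin (n * θ) = 2 * cos θ * sin ((n + 1 : ℕ) * θ) := by
  rw [sin_add_sin]
  push_cast
  ring_nf

theorem sin_nat_mul_pi_div_pos {N j : ℕ} (hj : 0 < j) (hjN : j ≤ N) :
    0 < sin (j * (π / (2 * N + 1))) := by
  have hjN' : (j : ℝ) < 2 * N + 1 := by norm_cast; omega
  apply sin_pos_of_pos_of_lt_pi (by positivity)
  rw [mul_div_assoc', div_lt_iff₀ (by positivity)]
  nlinarith [pi_pos]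

theorem sin_succ_mul_eq_sin_mul {θ : ℝ} {m : ℕ} (hθ : (2 * m + 1) * θ = π) :
    sin ((m + 1 : ℕ) * θ) = sin (m * θ) := by
  rw [← sin_pi_sub, ← hθ]
  push_cast
  ring_nf

theorem Fin.sum_ite_val_eq {M : Type*} [AddCommMonoid M] {N : ℕ} (f : ℕ → M) (k : ℕ) :
    ∑ j : Fin N, (if j.val = k then f j else 0) = if k < N then f k else 0 := by
  rw [Fin.sum_univ_eq_sum_range (fun n => if n = k then f n else 0), sum_ite_eq']
  simp only [mem_range]

def pathTridiag {N : ℕ} (d : Fin N → ℝ) : Matrix (Fin N) (Fin N) ℝ :=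
  of fun i j => if i = j then d i else if i.val + 1 = j.val ∨ j.val + 1 = i.val then -1 else 0

namespace pathTridiag

variable {N : ℕ} (d : Fin N → ℝ)

theorem apply_nonpos_of_ne {i j : Fin N} (hij : i ≠ j) : pathTridiag d i j ≤ 0 := by
  simp only [pathTridiag, of_apply, if_neg hij]
  split_ifs <;> norm_num

theorem apply_eq (i j : Fin N) :
    pathTridiag d i j = (if j = i then d i else 0) - (if j.val = i.val + 1 then 1 else 0)
      - (if j.val + 1 = i.val then 1 else 0) := by
  simp only [pathTridiag, of_apply, eq_comm (a := j), Fin.ext_iff]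
  split_ifs <;> first | (exfalso; omega) | ring

-- `g 0` stands for the missing left neighbour of the first row.
theorem mulVec_apply {g : ℕ → ℝ} (hg : g 0 = 0) (i : Fin N) :
    (pathTridiag d *ᵥ fun j => g (j + 1)) i =
      d i * g (i + 1) - (if i.val + 1 < N then g (i + 2) else 0) - g i := by
  have hprev : ∑ j : Fin N, (if j.val + 1 = i.val then g (j + 1) else 0) = g i := by
    rcases Nat.eq_zero_or_pos i.val with hi | hi
    · simp [hi, hg]
    · obtain ⟨k, hk⟩ : ∃ k, i.val = k + 1 := ⟨i.val - 1, by omega⟩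
      simp only [hk, add_left_inj]
      rw [Fin.sum_ite_val_eq (fun n => g (n + 1)), if_pos (by omega)]
  simp only [mulVec, dotProduct, apply_eq, sub_mul, ite_mul, one_mul, zero_mul, sum_sub_distrib,
    sum_ite_eq', mem_univ, if_true]
  rw [Fin.sum_ite_val_eq (fun n => g (n + 1)), hprev]

end pathTridiag

noncomputable def pathSineVector (N : ℕ) : Fin N → ℝ :=
  fun j => sin ((j + 1 : ℕ) * (π / (2 * N + 1)))

theorem pathSineVector_pos {N : ℕ} (j : Fin N) : 0 < pathSineVector N j :=
  sin_nat_mul_pi_div_pos j.val.succ_pos j.isLt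

theorem pathTridiag_mulVec_pathSineVector (N : ℕ) :
    pathTridiag (fun i : Fin N => if i.val = N - 1 then 1 else 2) *ᵥ pathSineVector N =
      (2 - 2 * cos (π / (2 * N + 1))) • pathSineVector N := by
  set θ := π / (2 * N + 1)
  ext i
  unfold pathSineVector
  rw [pathTridiag.mulVec_apply _ (g := fun n : ℕ => sin (n * θ)) (by simp), Pi.smul_apply,
    smul_eq_mul]
  have hrec := sin_nat_add_two_mul_add_sin θ i
  by_cases hi : i.val + 1 < N
  · rw [if_neg (by omega), if_pos hi]
    linear_combination -hrec
  · have hN : N = i.val + 1 := by omega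
    have hθ : (2 * (i.val + 1 : ℕ) + 1) * θ = π := by
      rw [← hN]; exact mul_div_cancel₀ _ (by positivity)
    have hend := sin_succ_mul_eq_sin_mul hθ
    rw [if_pos (by omega), if_neg hi]
    linear_combination -hrec + hend

/-- Case 2/3 in the proof of the paper's Theorem 5: the `N×N` real symmetric
tridiagonal matrix with diagonal `(2, …, 2, 1)` and off-diagonal entries `-1`
(i.e. `Δ + |0⟩⟨0|` with `Δ` the path Laplacian) has smallest eigenvalue
`2 - 2cos(π/(2N+1))`. -/
theorem tridiag_smallest_eigenvalue_one_end (N : ℕ) (hN : 1 ≤ N)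
    (M : Matrix (Fin N) (Fin N) ℝ)
    (hM : M = Matrix.of (fun i j : Fin N =>
      if i = j then (if i.val = N - 1 then 1 else 2)
      else if i.val + 1 = j.val ∨ j.val + 1 = i.val then -1 else 0))
    (hHerm : M.IsHermitian) :
    (∃ i, hHerm.eigenvalues i = 2 - 2 * Real.cos (Real.pi / (2 * N + 1))) ∧
    (∀ i, 2 - 2 * Real.cos (Real.pi / (2 * N + 1)) ≤ hHerm.eigenvalues i) := by
  obtain rfl : M = pathTridiag _ := hM
  have hMw := pathTridiag_mulVec_pathSineVector N
  have hw_ne : pathSineVector N ≠ 0 := fun h =>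
    (pathSineVector_pos ⟨0, hN⟩).ne' (congrFun h _)
  exact ⟨hHerm.mem_range_eigenvalues_of_mulVec_eq_smul hw_ne hMw,
    hHerm.le_eigenvalues_of_pos_eigenvector (fun _ _ => pathTridiag.apply_nonpos_of_ne _)
      pathSineVector_pos hMw⟩
end

section
/- Let T be a natural number and let μ ∈ (0,1). For either choice of sign ±, every complex root z of the polynomial p_±(z) = z^{2T+3} + 1 ± √(1−μ)·z^{T+1}(z+1) satisfies |z| = 1. -/
open Complex Real Set

private lemma two_cos_eq' (x : ℂ) :
    Complex.exp (x*I) + Complex.exp (-(x*I)) = 2 * Complex.cos x := by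
  rw [show -(x*I) = (-x)*I by ring, Complex.exp_mul_I, Complex.exp_mul_I,
    Complex.cos_neg, Complex.sin_neg]
  ring

private lemma root_of_cos' (T : ℕ) (c : ℝ) (θ : ℝ)
    (h : Real.cos ((2*T+3)*θ/2) + c * Real.cos (θ/2) = 0) :
    Complex.exp (θ * I) ^ (2*T+3) + 1
      + (c:ℂ) * Complex.exp (θ * I) ^ (T+1) * (Complex.exp (θ*I) + 1) = 0 := by
  set u : ℂ := Complex.exp ((θ/2 : ℝ) * I) with hu
  have hune : u ≠ 0 := Complex.exp_ne_zero _
  have h2 : Complex.exp ((θ:ℂ) * I) = u ^ 2 := by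
    rw [hu, ← Complex.exp_nat_mul]; push_cast; ring_nf
  have hc1 : u ^ (2*T+3) + (u ^ (2*T+3))⁻¹ = 2 * Complex.cos (((2*T+3:ℕ)*θ/2 : ℝ)) := by
    have : u ^ (2*T+3) = Complex.exp ((((2*T+3:ℕ)*θ/2 : ℝ):ℂ) * I) := by
      rw [hu, ← Complex.exp_nat_mul]; push_cast; ring_nf
    rw [this, ← Complex.exp_neg, two_cos_eq']
  have hc2 : u + u⁻¹ = 2 * Complex.cos ((θ/2 : ℝ)) := by
    rw [hu, ← Complex.exp_neg, two_cos_eq']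
  have hzero : u ^ (2*T+3) + (u ^ (2*T+3))⁻¹ + (c:ℂ) * (u + u⁻¹) = 0 := by
    rw [hc1, hc2]
    have := congrArg (fun r : ℝ => (r : ℂ)) h
    push_cast at this ⊢
    linear_combination 2 * this
  rw [h2]
  have hp : u ^ (2*T+3) ≠ 0 := pow_ne_zero _ hune
  have hA : u ^ (2*T+3) * (u ^ (2*T+3))⁻¹ = 1 := mul_inv_cancel₀ hp
  have hB : u ^ (2*T+3) * u⁻¹ = u ^ (2*T+2) := by
    rw [pow_succ, mul_inv_cancel_right₀ hune]
  linear_combination u ^ (2*T+3) * hzero - hA - (c:ℂ) * hB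

private lemma exists_theta' (T : ℕ) (c : ℝ) (hc : |c| < 1) (j : ℕ) :
    ∃ θ : ℝ, θ ∈ Set.Ioo (2*π*j/(2*T+3)) (2*π*(j+1)/(2*T+3)) ∧
      Real.cos ((2*T+3)*θ/2) + c * Real.cos (θ/2) = 0 := by
  have hN : (0:ℝ) < 2*T+3 := by positivity
  set g : ℝ → ℝ := fun θ => Real.cos ((2*T+3)*θ/2) + c * Real.cos (θ/2) with hg
  have hgc : Continuous g := by fun_prop
  have hval : ∀ k : ℕ, g (2*π*k/(2*T+3)) = (-1)^k + c * Real.cos (π*k/(2*T+3)) := by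
    intro k
    have e1 : (2*(T:ℝ)+3) * (2*π*k/(2*T+3))/2 = (k:ℝ)*π := by field_simp
    have e2 : (2*π*(k:ℝ)/(2*T+3))/2 = π*k/(2*T+3) := by ring
    have e3 : Real.cos ((k:ℝ)*π) = (-1)^k := by
      simpa using Real.cos_nat_mul_pi_sub 0 k
    rw [hg]; simp only [e1, e2, e3]
  have hsmall : ∀ k : ℕ, |c * Real.cos (π*k/(2*T+3))| < 1 := by
    intro k
    calc |c * Real.cos (π*k/(2*T+3))| = |c| * |Real.cos (π*k/(2*T+3))| := abs_mul _ _
      _ ≤ |c| * 1 := by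
          exact mul_le_mul_of_nonneg_left (Real.abs_cos_le_one _) (abs_nonneg _)
      _ < 1 := by simpa using hc
  have hmono : (2*π*(j:ℝ)/(2*T+3)) ≤ 2*π*((j:ℕ)+1)/(2*T+3) := by
    have := Real.pi_pos
    gcongr
    all_goals push_cast; linarith
  rcases Nat.even_or_odd j with hj | hj
  · -- g positive at left end, negative at right end
    have h1 : 0 < g (2*π*j/(2*T+3)) := by
      have hb := abs_lt.1 (hsmall j)
      rw [hval j, hj.neg_one_pow]
      linarith
    have h2 : g (2*π*(j+1:ℕ)/(2*T+3)) < 0 := by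
      have hb := abs_lt.1 (hsmall (j+1))
      rw [hval (j+1), (Even.add_one hj).neg_one_pow]
      linarith
    have := intermediate_value_Ioo' hmono hgc.continuousOn
      (a := 2*π*j/(2*T+3)) (b := 2*π*((j:ℕ)+1)/(2*T+3))
    have hmem : (0:ℝ) ∈ Set.Ioo (g (2*π*((j:ℕ)+1)/(2*T+3))) (g (2*π*(j:ℝ)/(2*T+3))) := by
      constructor
      · push_cast at h2 ⊢; linarith
      · exact h1
    obtain ⟨θ, hθ1, hθ2⟩ := this hmem
    exact ⟨θ, by push_cast at hθ1 ⊢; exact hθ1, hθ2⟩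
  · have h1 : g (2*π*j/(2*T+3)) < 0 := by
      rw [hval j, hj.neg_one_pow]
      have := abs_lt.1 (hsmall j); linarith
    have h2 : 0 < g (2*π*(j+1:ℕ)/(2*T+3)) := by
      rw [hval (j+1), (Odd.add_one hj).neg_one_pow]
      have := abs_lt.1 (hsmall (j+1)); linarith
    have := intermediate_value_Ioo hmono hgc.continuousOn
      (a := 2*π*j/(2*T+3)) (b := 2*π*((j:ℕ)+1)/(2*T+3))
    have hmem : (0:ℝ) ∈ Set.Ioo (g (2*π*(j:ℝ)/(2*T+3))) (g (2*π*((j:ℕ)+1)/(2*T+3))) := by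
      constructor
      · exact h1
      · push_cast at h2 ⊢; linarith
    obtain ⟨θ, hθ1, hθ2⟩ := this hmem
    exact ⟨θ, by push_cast at hθ1 ⊢; exact hθ1, hθ2⟩

private lemma exp_theta_inj' {a b : ℝ} (ha : a ∈ Set.Ioo 0 (2*π)) (hb : b ∈ Set.Ioo 0 (2*π))
    (h : Complex.exp (a * I) = Complex.exp (b * I)) : a = b := by
  rw [Complex.exp_eq_exp_iff_exists_int] at h
  obtain ⟨n, hn⟩ := h
  have h2 : ((a - b - n*(2*π) : ℝ) : ℂ) * I = 0 := by push_cast; linear_combination hn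
  have h3 : a - b - n*(2*π) = 0 := by
    have := mul_eq_zero.1 h2
    rcases this with h | h
    · exact_mod_cast h
    · exact absurd h Complex.I_ne_zero
  have hpi := Real.pi_pos
  have hn0 : n = 0 := by
    rcases lt_trichotomy n 0 with h | h | h
    · have : (n:ℝ) ≤ -1 := by exact_mod_cast (by omega : n ≤ -1)
      nlinarith [ha.1, ha.2, hb.1, hb.2]
    · exact h
    · have : (1:ℝ) ≤ n := by exact_mod_cast h
      nlinarith [ha.1, ha.2, hb.1, hb.2]
  rw [hn0] at h3; push_cast at h3; linarith

/-- In the proof of the paper's Theorem 5: for `μ ∈ (0,1)` and either choice of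
sign, every complex root of `p_±(z) = z^{2T+3} + 1 ± √(1-μ)·z^{T+1}(z+1)` lies
on the unit circle. -/
theorem roots_on_unit_circle (T : ℕ) (μ : ℝ) (hμ0 : 0 < μ) (hμ1 : μ < 1)
    (s : ℝ) (hs : s = 1 ∨ s = -1) (z : ℂ)
    (hz : z ^ (2 * T + 3) + 1
        + (s : ℂ) * (Real.sqrt (1 - μ) : ℂ) * z ^ (T + 1) * (z + 1) = 0) :
    ‖z‖ = 1 := by
  by_contra hne
  set c : ℝ := s * Real.sqrt (1 - μ) with hcdef
  have hcabs : |c| < 1 := by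
    have h1 : 0 ≤ 1 - μ := by linarith
    have h2 : Real.sqrt (1 - μ) < 1 := by
      nlinarith [Real.sq_sqrt h1, Real.sqrt_nonneg (1 - μ)]
    have habs_s : |s| = 1 := by rcases hs with h | h <;> simp [h]
    rw [hcdef, abs_mul, habs_s, one_mul, _root_.abs_of_nonneg (Real.sqrt_nonneg _)]
    exact h2
  have hccast : ((c:ℝ):ℂ) = (s : ℂ) * (Real.sqrt (1 - μ) : ℂ) := by
    rw [hcdef]; push_cast; ring
  -- the polynomial
  set P : Polynomial ℂ :=
    Polynomial.X ^ (2*T+3) + Polynomial.C 1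
      + Polynomial.C (c:ℂ) * Polynomial.X ^ (T+1) * (Polynomial.X + 1) with hP
  have hevalP : ∀ w : ℂ, P.eval w = w ^ (2*T+3) + 1 + (c:ℂ) * w ^ (T+1) * (w+1) := by
    intro w; simp [hP]
  have hdeg : P.natDegree = 2*T+3 := by
    rw [hP]; compute_degree!
    all_goals first
      | omega
      | (rw [if_neg (by omega : ¬(2*T+3 = T+1+1))]; norm_num)
  have hP0 : P ≠ 0 := by
    intro h0
    rw [h0, Polynomial.natDegree_zero] at hdeg
    omega
  -- choose the unit-circle roots
  have H : ∀ j : ℕ, ∃ θ : ℝ,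
      θ ∈ Set.Ioo (2*π*j/(2*T+3)) (2*π*(j+1)/(2*T+3)) ∧
      Real.cos ((2*T+3)*θ/2) + c * Real.cos (θ/2) = 0 :=
    fun j => exists_theta' T c hcabs j
  choose θf hθmem hθcos using H
  set w : ℕ → ℂ := fun j => Complex.exp (θf j * I) with hw
  have hwnorm : ∀ j, ‖w j‖ = 1 := fun j => Complex.norm_exp_ofReal_mul_I _
  have hwroot : ∀ j, P.eval (w j) = 0 := by
    intro j
    rw [hevalP]
    exact root_of_cos' T c (θf j) (hθcos j)
  have hpi := Real.pi_pos
  have hN : (0:ℝ) < 2*T+3 := by positivity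
  have hxmono : ∀ k k' : ℕ, k ≤ k' → 2*π*(k:ℝ)/(2*T+3) ≤ 2*π*(k':ℝ)/(2*T+3) := by
    intro k k' hk
    gcongr
    all_goals first | linarith | exact_mod_cast hk
  have hθlt : ∀ j j' : ℕ, j < j' → θf j < θf j' := by
    intro j j' hj
    have h1 := (hθmem j).2
    have h2 := (hθmem j').1
    have h3 := hxmono (j+1) j' hj
    push_cast at h1 h2 h3 ⊢
    linarith
  have hθIoo : ∀ j : ℕ, j < 2*T+3 → θf j ∈ Set.Ioo 0 (2*π) := by
    intro j hj
    constructor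
    · have h1 := (hθmem j).1
      have h0 : (0:ℝ) ≤ 2*π*(j:ℝ)/(2*T+3) := by positivity
      linarith
    · have h1 := (hθmem j).2
      have h3 := hxmono (j+1) (2*T+3) hj
      have h4 : 2*π*((2*T+3:ℕ):ℝ)/(2*T+3) = 2*π := by
        push_cast; field_simp
      push_cast at h1 h3 h4 ⊢
      linarith
  -- the finset of roots
  have hinj : Set.InjOn w (Finset.range (2*T+3)) := by
    intro j hj j' hj' hww
    simp only [Finset.coe_range, Set.mem_Iio] at hj hj'
    by_contra hne'
    rcases lt_or_gt_of_ne hne' with h | h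
    · exact absurd (exp_theta_inj' (hθIoo j hj) (hθIoo j' hj') hww) (ne_of_lt (hθlt _ _ h))
    · exact absurd (exp_theta_inj' (hθIoo j hj) (hθIoo j' hj') hww).symm
        (ne_of_lt (hθlt _ _ h))
  set F : Finset ℂ := insert z ((Finset.range (2*T+3)).image w) with hF
  have hznotmem : z ∉ (Finset.range (2*T+3)).image w := by
    intro hmem
    obtain ⟨j, _, hj⟩ := Finset.mem_image.1 hmem
    exact hne (hj ▸ hwnorm j)
  have hcard : F.card = 2*T+4 := by
    rw [hF, Finset.card_insert_of_notMem hznotmem,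
      Finset.card_image_of_injOn hinj, Finset.card_range]
  have hsub : F.val ⊆ P.roots := by
    intro a ha
    rw [Finset.mem_val, hF, Finset.mem_insert] at ha
    rw [Polynomial.mem_roots hP0]
    rcases ha with rfl | ha
    · rw [Polynomial.IsRoot, hevalP, hccast]
      exact hz
    · obtain ⟨j, _, rfl⟩ := Finset.mem_image.1 ha
      exact hwroot j
  have := Polynomial.card_le_degree_of_subset_roots hsub
  rw [hcard, hdeg] at this
  omega
end

section
/- Let T be a natural number and let μ ∈ (0,1). Then there exists a real number k with 0 < k < π/(2T+3) such that cos((T + 3/2)·k) = √(1−μ)·cos(k/2). -/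
/-- In the proof of the paper's Theorem 5: for `μ ∈ (0,1)` there is a real solution
`k` with `0 < k < π/(2T+3)` of the equation `cos((T+3/2)k) = √(1-μ)·cos(k/2)`,
which determines the smallest eigenvalue `2 - 2cos(k)` of the quantum-walk block. -/
theorem exists_smallest_momentum (T : ℕ) (μ : ℝ) (hμ0 : 0 < μ) (hμ1 : μ < 1) :
    ∃ k : ℝ, 0 < k ∧ k < Real.pi / (2 * T + 3) ∧
      Real.cos (((T : ℝ) + 3 / 2) * k) = Real.sqrt (1 - μ) * Real.cos (k / 2) := by
  set f : ℝ → ℝ := fun k => Real.cos (((T : ℝ) + 3 / 2) * k) -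
      Real.sqrt (1 - μ) * Real.cos (k / 2) with hf
  have hden : (0:ℝ) < 2 * T + 3 := by positivity
  set b : ℝ := Real.pi / (2 * T + 3) with hb
  have hbpos : 0 < b := div_pos Real.pi_pos hden
  have hble : b < Real.pi := by
    rw [hb, div_lt_iff₀ hden]
    nlinarith [Real.pi_pos, Nat.cast_nonneg (α := ℝ) T]
  have hcont : ContinuousOn f (Set.Icc 0 b) := by fun_prop
  have hsqrt_lt : Real.sqrt (1 - μ) < 1 := by
    exact (Real.sqrt_lt' one_pos).2 (by nlinarith)
  have hsqrt_pos : 0 < Real.sqrt (1 - μ) := Real.sqrt_pos.2 (by linarith)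
  have hfa : 0 < f 0 := by
    simp only [hf, mul_zero, zero_div, Real.cos_zero, mul_one]
    linarith
  have hfb : f b < 0 := by
    have h1 : ((T : ℝ) + 3 / 2) * b = Real.pi / 2 := by
      rw [hb]; field_simp
    have h2 : 0 < Real.cos (b / 2) :=
      Real.cos_pos_of_mem_Ioo ⟨by linarith, by linarith [Real.pi_pos]⟩
    simp only [hf, h1, Real.cos_pi_div_two]
    nlinarith
  have := intermediate_value_Ioo' (le_of_lt hbpos) hcont
    (Set.mem_Ioo.2 ⟨hfb, hfa⟩ : (0:ℝ) ∈ Set.Ioo (f b) (f 0))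
  obtain ⟨k, hk, hfk⟩ := this
  exact ⟨k, hk.1, hk.2, by simpa [hf, sub_eq_zero] using hfk⟩
end

section
/- Let E be a finite-dimensional complex inner product space and let P, Q : E → E be two orthogonal projections (self-adjoint idempotent linear maps). Then E decomposes as an internal orthogonal direct sum of finitely many subspaces, each of dimension at most 2, each of which is invariant under both P and Q. -/
/-!
Inside every nonzero subspace `W` invariant under both projections there is a nonzero invariant
subspace of dimension at most two, of the form `span {u, P u}`: if `Q` kills `W` any nonzero
`u ∈ W` works, and otherwise one takes an eigenvector `u` of `Q P` inside `Q W`, so that `Q u = u`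
and `Q (P u) ∈ ℂ u`. As `P` and `Q` are symmetric, the orthogonal complement of such a piece
inside `W` is again invariant, and induction on the dimension splits all of `E`.
-/

open Module Submodule

section Idempotent

variable {K V : Type*} [Field K] [AddCommGroup V] [Module K V]

theorem finrank_span_pair_le_two (u v : V) : finrank K (span K {u, v}) ≤ 2 := by
  classical
  have := (finrank_span_finset_le_card (R := K) {u, v}).trans Finset.card_le_two
  rwa [Finset.coe_insert, Finset.coe_singleton] at this

namespace Module.End

theorem exists_hasEigenvector_mem_of_mem_invtSubmodule [IsAlgClosed K] [FiniteDimensional K V]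
    (f : End K V) {U : Submodule K V} (hU : U ≠ ⊥) (hfU : U ∈ f.invtSubmodule) :
    ∃ μ u, u ∈ U ∧ f.HasEigenvector μ u := by
  have : Nontrivial U := nontrivial_iff_ne_bot.mpr hU
  obtain ⟨μ, hμ⟩ := exists_eigenvalue (f.restrict hfU)
  obtain ⟨u, hu⟩ := hμ.exists_hasEigenvector
  exact ⟨μ, u, u.2, hasEigenvector_iff.mpr
    ⟨mem_eigenspace_iff.mpr (congrArg Subtype.val hu.apply_eq_smul), fun h => hu.2 (Subtype.ext h)⟩⟩

variable {P Q : End K V}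

theorem span_pair_apply_mem_invtSubmodule (hP : IsIdempotentElem P) (u : V) :
    span K {u, P u} ∈ P.invtSubmodule := by
  refine (mem_invtSubmodule_iff_map_le _).mpr ((map_span_le _ _ _).mpr ?_)
  rintro x (rfl | rfl)
  · exact subset_span (by simp)
  · rw [show P (P u) = P u from LinearMap.congr_fun hP.eq u]
    exact subset_span (by simp)

theorem exists_le_finrank_le_two_mem_invtSubmodule [IsAlgClosed K] [FiniteDimensional K V]
    (hP : IsIdempotentElem P) (hQ : IsIdempotentElem Q) {W : Submodule K V} (hW : W ≠ ⊥)
    (hPW : W ∈ P.invtSubmodule) (hQW : W ∈ Q.invtSubmodule) :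
    ∃ U ≤ W, U ≠ ⊥ ∧ finrank K U ≤ 2 ∧ U ∈ P.invtSubmodule ⊓ Q.invtSubmodule := by
  suffices ∃ u ∈ W, u ≠ 0 ∧ Q u ∈ span K {u, P u} ∧ Q (P u) ∈ span K {u, P u} by
    obtain ⟨u, huW, hu0, hQu, hQPu⟩ := this
    refine ⟨span K {u, P u}, ?_, ?_, finrank_span_pair_le_two _ _,
      span_pair_apply_mem_invtSubmodule hP u, ?_⟩
    · rw [span_le]
      rintro x (rfl | rfl)
      exacts [huW, hPW huW]
    · exact fun h => hu0 (by simpa [h] using (subset_span (by simp) : u ∈ span K {u, P u}))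
    · refine (mem_invtSubmodule_iff_map_le _).mpr ((map_span_le _ _ _).mpr ?_)
      rintro x (rfl | rfl)
      exacts [hQu, hQPu]
  by_cases hQW0 : W.map Q = ⊥
  · obtain ⟨u, huW, hu0⟩ := exists_mem_ne_zero_of_ne_bot hW
    have hQ0 : ∀ x ∈ W, Q x = 0 := fun x hx => by
      simpa [hQW0] using mem_map_of_mem (f := Q) hx
    exact ⟨u, huW, hu0, by simp [hQ0 u huW], by simp [hQ0 _ (hPW huW)]⟩
  · have hQP : W.map Q ∈ (Q * P).invtSubmodule := by
      rintro _ ⟨x, hx, rfl⟩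
      exact ⟨P (Q x), hPW (hQW hx), rfl⟩
    obtain ⟨μ, u, ⟨x, hx, rfl⟩, hu⟩ :=
      exists_hasEigenvector_mem_of_mem_invtSubmodule (Q * P) hQW0 hQP
    refine ⟨Q x, hQW hx, hu.2, ?_, ?_⟩
    · rw [show Q (Q x) = Q x from LinearMap.congr_fun hQ.eq x]
      exact subset_span (by simp)
    · rw [show Q (P (Q x)) = μ • Q x from hu.apply_eq_smul]
      exact smul_mem _ _ (subset_span (by simp))

end Module.End

end Idempotent

section Jordan

variable {E : Type*} [NormedAddCommGroup E] [InnerProductSpace ℂ E] [FiniteDimensional ℂ E]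
  {P Q : Module.End ℂ E}

theorem exists_finset_isOrtho_finrank_le_two_of_mem_invtSubmodule
    (hPs : P.IsSymmetric) (hP : IsIdempotentElem P) (hQs : Q.IsSymmetric)
    (hQ : IsIdempotentElem Q) {V : Submodule ℂ E}
    (hV : V ∈ P.invtSubmodule ⊓ Q.invtSubmodule) :
    ∃ S : Finset (Submodule ℂ E), (S : Set (Submodule ℂ E)).Pairwise (· ⟂ ·) ∧
      sSup (S : Set (Submodule ℂ E)) = V ∧
      ∀ W ∈ S, finrank ℂ W ≤ 2 ∧ W ∈ P.invtSubmodule ⊓ Q.invtSubmodule := by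
  classical
  induction hn : finrank ℂ V using Nat.strong_induction_on generalizing V with
  | _ n ih =>
  obtain rfl | hV0 := eq_or_ne V ⊥
  · exact ⟨∅, by simp, by simp, by simp⟩
  obtain ⟨W, hWV, hW0, hW2, hW⟩ :=
    Module.End.exists_le_finrank_le_two_mem_invtSubmodule hP hQ hV0 hV.1 hV.2
  have hWperp : Wᗮ ∈ P.invtSubmodule ⊓ Q.invtSubmodule :=
    ⟨hPs.orthogonalComplement_mem_invtSubmodule hW.1,
      hQs.orthogonalComplement_mem_invtSubmodule hW.2⟩
  have hlt : finrank ℂ (Wᗮ ⊓ V : Submodule ℂ E) < n := by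
    have hWpos : 1 ≤ finrank ℂ W := Submodule.one_le_finrank_iff.mpr hW0
    have := finrank_add_inf_finrank_orthogonal hWV
    omega
  obtain ⟨S, hSo, hSV, hS⟩ := ih _ hlt (Sublattice.inf_mem hWperp hV) rfl
  refine ⟨insert W S, ?_, ?_, ?_⟩
  · rw [Finset.coe_insert]
    refine hSo.insert fun X hX _ => ?_
    have hXW : X ⟂ W := isOrtho_iff_le.mpr ((le_sSup hX).trans (hSV ▸ inf_le_left))
    exact ⟨hXW.symm, hXW⟩
  · rw [Finset.coe_insert, sSup_insert, hSV, sup_orthogonal_inf_of_hasOrthogonalProjection hWV]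
  · exact Finset.forall_mem_insert _ _ _ |>.mpr ⟨⟨hW2, hW⟩, hS⟩

end Jordan

/-- **Jordan's lemma on pairs of projections** (Jordan 1875): if `P` and `Q` are two
orthogonal projections (self-adjoint idempotents) on a finite-dimensional complex
inner product space `E`, then `E` decomposes as an internal orthogonal direct sum of
finitely many subspaces of dimension at most 2, each invariant under both `P` and `Q`. -/
theorem jordan_two_projections (E : Type*) [NormedAddCommGroup E]
    [InnerProductSpace ℂ E] [FiniteDimensional ℂ E]
    (P Q : E →ₗ[ℂ] E)
    (hP : LinearMap.IsSymmetric P) (hP2 : P ∘ₗ P = P)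
    (hQ : LinearMap.IsSymmetric Q) (hQ2 : Q ∘ₗ Q = Q) :
    ∃ (n : ℕ) (V : Fin n → Submodule ℂ E),
      DirectSum.IsInternal V ∧
      OrthogonalFamily ℂ (fun i => V i) (fun i => (V i).subtypeₗᵢ) ∧
      (∀ i, Module.finrank ℂ (V i) ≤ 2) ∧
      (∀ i, ∀ x ∈ V i, P x ∈ V i) ∧
      (∀ i, ∀ x ∈ V i, Q x ∈ V i) := by
  obtain ⟨S, hSo, hStop, hS⟩ := exists_finset_isOrtho_finrank_le_two_of_mem_invtSubmodule
    hP hP2 hQ hQ2 (V := ⊤) ⟨Module.End.invtSubmodule.top_mem P, Module.End.invtSubmodule.top_mem Q⟩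
  let e := S.equivFin
  have hOrth : OrthogonalFamily ℂ (fun i => (e.symm i : Submodule ℂ E))
      fun i => (e.symm i : Submodule ℂ E).subtypeₗᵢ :=
    .of_pairwise fun i j hij =>
      hSo (e.symm i).2 (e.symm j).2 (Subtype.coe_injective.ne (e.symm.injective.ne hij))
  have hsup : ⨆ i, (e.symm i : Submodule ℂ E) = ⊤ := by
    rw [e.symm.iSup_comp (g := fun W : S => (W : Submodule ℂ E)), ← hStop, sSup_eq_iSup']
    rfl
  exact ⟨S.card, fun i => e.symm i,
    DirectSum.isInternal_submodule_of_iSupIndep_of_iSup_eq_top hOrth.independent hsup, hOrth,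
    fun i => (hS _ (e.symm i).2).1, fun i => (hS _ (e.symm i).2).2.1,
    fun i => (hS _ (e.symm i).2).2.2⟩
end
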